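/- Let m > k ≥ 2 be integers, let n be an integer, and for 1 ≤ i ≤ k−1 define the rational numbers U_{m,k,i} = (k−1)·C(m,i)/C(k−1,i) and b(n,k,m,i) = n·i − (k−i)(U_{m,k,i} − n)/(m−k+1). Then for every integer i with 1 ≤ i ≤ k−2, b(n,k,m,i) − b(n,k,m,i+1) = (m−k)(U_{m,k,i} − n)/(m−k+1). Consequently, if c with 1 ≤ c ≤ k−1 is least such that n ≤ U_{m,k,c}, then b(n,k,m,i) is maximized over 1 ≤ i ≤ k−1 at i = c. -/

import Mathlib

/-- `batchU m k i` is the rational number `U_{m,k,i} = (k-1)·C(m,i)/C(k-1,i)`. -/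
def batchU (m k i : ℕ) : ℚ :=
  ((k : ℚ) - 1) * (Nat.choose m i : ℚ) / (Nat.choose (k - 1) i : ℚ)

/-- `batchB n k m i = b(n,k,m,i) = n·i - (k-i)(U_{m,k,i} - n)/(m-k+1)`, the family of
lower-bound estimates for the minimum total storage of an (n,N,k,m)-CBC. -/
def batchB (n : ℤ) (k m i : ℕ) : ℚ :=
  (n : ℚ) * i - ((k : ℚ) - i) * (batchU m k i - n) / ((m : ℚ) - k + 1)

/-! The recurrence `(k - 1 - i) U_{i+1} = (m - i) U_i`, which is the identity
`C(a, i+1) (i+1) = C(a, i) (a - i)` applied to both binomials, makes `b_i - b_{i+1}` collapse to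
`(m - k)(U_i - n)/(m - k + 1)` and shows, since `m - i > k - 1 - i`, that `U` is nondecreasing.
So `b` increases while `U_i < n` and decreases from then on: it peaks at the least `c` with
`n ≤ U_c`. -/

theorem Nat.apply_le_apply_of_unimodal {α : Type*} [Preorder α] {f : ℕ → α} {a b c : ℕ}
    (hup : ∀ j, a ≤ j → j < c → f j ≤ f (j + 1))
    (hdown : ∀ j, c ≤ j → j < b → f (j + 1) ≤ f j) {i : ℕ} (hai : a ≤ i) (hib : i ≤ b) :
    f i ≤ f c := by
  rcases le_total i c with hic | hci
  · refine monotoneOn_of_le_succ Set.ordConnected_Icc (fun j _ hj hj' => ?_)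
      ⟨hai, hic⟩ ⟨hai.trans hic, le_rfl⟩ hic
    simp only [Order.succ_eq_add_one, Set.mem_Icc] at hj hj' ⊢
    exact hup j hj.1 (by omega)
  · refine antitoneOn_of_succ_le Set.ordConnected_Icc (fun j _ hj hj' => ?_)
      ⟨le_rfl, hci.trans hib⟩ ⟨hci, hib⟩ hci
    simp only [Order.succ_eq_add_one, Set.mem_Icc] at hj hj' ⊢
    exact hdown j hj.1 (by omega)

theorem Nat.cast_choose_succ_mul {R : Type*} [CommRing R] (n i : ℕ) :
    (n.choose (i + 1) : R) * (i + 1) = n.choose i * (n - i) := by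
  rcases le_or_gt i n with hin | hni
  · have h := congrArg (Nat.cast : ℕ → R) (n.choose_succ_right_eq i)
    push_cast [Nat.cast_sub hin] at h
    exact h
  · simp [Nat.choose_eq_zero_of_lt hni, Nat.choose_eq_zero_of_lt (hni.trans (Nat.lt_succ_self i))]

theorem batchU_nonneg {k : ℕ} (hk : 1 ≤ k) (m i : ℕ) : 0 ≤ batchU m k i := by
  have : (0 : ℚ) ≤ k - 1 := sub_nonneg.mpr (by exact_mod_cast hk)
  unfold batchU
  positivity

theorem sub_one_sub_mul_batchU_succ {k i : ℕ} (hi : i + 1 < k) (m : ℕ) :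
    ((k : ℚ) - 1 - i) * batchU m k (i + 1) = (m - i) * batchU m k i := by
  have hk : (((k - 1 : ℕ) : ℚ)) = k - 1 := by rw [Nat.cast_sub (by omega), Nat.cast_one]
  have hm := Nat.cast_choose_succ_mul (R := ℚ) m i
  have hk1 := Nat.cast_choose_succ_mul (R := ℚ) (k - 1) i
  rw [hk] at hk1
  have h0 : ((k - 1).choose i : ℚ) ≠ 0 := by exact_mod_cast (Nat.choose_pos (by omega)).ne'
  have h1 : ((k - 1).choose (i + 1) : ℚ) ≠ 0 := by exact_mod_cast (Nat.choose_pos (by omega)).ne'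
  have hi1 : (i : ℚ) + 1 ≠ 0 := by positivity
  unfold batchU
  field_simp
  apply mul_left_cancel₀ hi1
  linear_combination (((k:ℚ)-1-i)*((k:ℚ)-1)*((k-1).choose i : ℚ)) * hm -
    (((m:ℚ)-i)*((k:ℚ)-1)*(m.choose i : ℚ)) * hk1

theorem batchU_le_succ {k m i : ℕ} (hkm : k ≤ m) (hi : i + 1 < k) :
    batchU m k i ≤ batchU m k (i + 1) := by
  have hrec := sub_one_sub_mul_batchU_succ hi m
  have hU := batchU_nonneg (by omega : 1 ≤ k) m i
  have hpos : (0 : ℚ) < k - 1 - i := by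
    have : ((i + 1 : ℕ) : ℚ) < k := by exact_mod_cast hi
    push_cast at this; linarith
  have hkm' : (k : ℚ) ≤ m := by exact_mod_cast hkm
  refine le_of_mul_le_mul_left ?_ hpos
  rw [hrec]
  exact mul_le_mul_of_nonneg_right (by linarith) hU

theorem batchU_monotoneOn {k m : ℕ} (hkm : k ≤ m) : MonotoneOn (batchU m k) (Set.Iio k) :=
  monotoneOn_of_le_succ Set.ordConnected_Iio fun _ _ _ hi => batchU_le_succ hkm hi

theorem batchB_sub_batchB_succ (n : ℤ) {k m i : ℕ} (hkm : k ≤ m) (hi : i + 1 < k) :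
    batchB n k m i - batchB n k m (i + 1)
      = ((m : ℚ) - k) * (batchU m k i - n) / ((m : ℚ) - k + 1) := by
  have hkm' : (k : ℚ) ≤ m := by exact_mod_cast hkm
  have hden : (m : ℚ) - k + 1 ≠ 0 := by linarith
  have hrec := sub_one_sub_mul_batchU_succ hi m
  unfold batchB
  field_simp
  push_cast
  linear_combination hrec

theorem batchB_le_succ {n : ℤ} {k m i : ℕ} (hkm : k ≤ m) (hi : i + 1 < k)
    (hU : batchU m k i ≤ n) : batchB n k m i ≤ batchB n k m (i + 1) := by
  have hkm' : (k : ℚ) ≤ m := by exact_mod_cast hkm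
  have := batchB_sub_batchB_succ n hkm hi
  have : ((m : ℚ) - k) * (batchU m k i - n) / ((m : ℚ) - k + 1) ≤ 0 :=
    div_nonpos_of_nonpos_of_nonneg (mul_nonpos_of_nonneg_of_nonpos (by linarith) (by linarith))
      (by linarith)
  linarith

theorem batchB_succ_le {n : ℤ} {k m i : ℕ} (hkm : k ≤ m) (hi : i + 1 < k)
    (hU : n ≤ batchU m k i) : batchB n k m (i + 1) ≤ batchB n k m i := by
  have hkm' : (k : ℚ) ≤ m := by exact_mod_cast hkm
  have := batchB_sub_batchB_succ n hkm hi
  have : 0 ≤ ((m : ℚ) - k) * (batchU m k i - n) / ((m : ℚ) - k + 1) := by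
    apply div_nonneg (mul_nonneg _ _) <;> linarith
  linarith

theorem batchB_max_at_least_c_general (n : ℤ) (k m : ℕ) (hkm : k < m) :
    (∀ i : ℕ, 1 ≤ i → i ≤ k - 2 →
        batchB n k m i - batchB n k m (i + 1)
          = ((m : ℚ) - k) * (batchU m k i - n) / ((m : ℚ) - k + 1)) ∧
    (∀ c : ℕ, 1 ≤ c → c ≤ k - 1 → (n : ℚ) ≤ batchU m k c →
        (∀ c', 1 ≤ c' → c' < c → ¬ ((n : ℚ) ≤ batchU m k c')) →
        ∀ i : ℕ, 1 ≤ i → i ≤ k - 1 → batchB n k m i ≤ batchB n k m c) := by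
  refine ⟨fun _ hi hik => batchB_sub_batchB_succ n hkm.le (by omega),
    fun c hc hck hnc hmin i hi hik => ?_⟩
  refine Nat.apply_le_apply_of_unimodal (fun j hj hjc => ?_) (fun j hcj hjk => ?_) hi hik
  · exact batchB_le_succ hkm.le (by omega) (not_le.mp (hmin j hj hjc)).le
  · have hUc : (n : ℚ) ≤ batchU m k j :=
      hnc.trans <| batchU_monotoneOn hkm.le (Set.mem_Iio.mpr (by omega))
        (Set.mem_Iio.mpr (by omega)) hcj
    exact batchB_succ_le hkm.le (by omega) hUc

/-- For `m > k ≥ 2` and integer `n`: the difference `b(n,k,m,i) - b(n,k,m,i+1)` equals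
`(m-k)(U_{m,k,i} - n)/(m-k+1)` for `1 ≤ i ≤ k-2`; consequently, if `c` with
`1 ≤ c ≤ k-1` is least such that `n ≤ U_{m,k,c}`, then `b(n,k,m,i)` is maximized over
`1 ≤ i ≤ k-1` at `i = c`. -/
theorem batchB_max_at_least_c (n : ℤ) (k m : ℕ) (hk : 2 ≤ k) (hkm : k < m) :
    (∀ i : ℕ, 1 ≤ i → i ≤ k - 2 →
        batchB n k m i - batchB n k m (i + 1)
          = ((m : ℚ) - k) * (batchU m k i - n) / ((m : ℚ) - k + 1)) ∧
    (∀ c : ℕ, 1 ≤ c → c ≤ k - 1 → (n : ℚ) ≤ batchU m k c →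
        (∀ c', 1 ≤ c' → c' < c → ¬ ((n : ℚ) ≤ batchU m k c')) →
        ∀ i : ℕ, 1 ≤ i → i ≤ k - 1 → batchB n k m i ≤ batchB n k m c) :=
  batchB_max_at_least_c_general n k m hkm
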